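/- arXiv:1401.0251 — 6 statements merged into one kernel-verified Lean document; each statement's English description precedes it below -/
import Mathlib

section
/- Let r : ℝ → ℝ be an even function, positive at 0, with r(u+v)·r(0) = r(u)·r(v) for all u, v ≥ 0, and suppose r is a positive-definite function (i.e., for all n, all t₁,...,tₙ ∈ ℝ and c₁,...,cₙ ∈ ℝ, ∑ᵢ∑ⱼ cᵢcⱼ r(tᵢ - tⱼ) ≥ 0) with r(u) > 0 for u ≥ 0 and r continuous. Then r(u) = A·exp(-α|u|) for some A > 0 and α ≥ 0. -/
/-!
On `[0, ∞)`, `g u := log (r u / r 0)` is continuous and additive; extending it to an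
odd function `u ↦ g u⁺ - g u⁻` gives a continuous additive map on `ℝ`, hence a linear one, so
`r u = r 0 * exp (c * u)` on `[0, ∞)` and, by evenness, `r u = r 0 * exp (c * |u|)` everywhere.
Positive definiteness, tested on the two points `x, 0` with weights `1, -1`, gives
`r x ≤ r 0`, which forces `c ≤ 0`.
-/

open Real Set

theorem exists_eq_mul_of_map_add_of_nonneg {g : ℝ → ℝ} (hg : ContinuousOn g (Ici 0))
    (hadd : ∀ u v, 0 ≤ u → 0 ≤ v → g (u + v) = g u + g v) :
    ∃ c, ∀ u, 0 ≤ u → g u = c * u := by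
  have hg0 : g 0 = 0 := by simpa using hadd 0 0 le_rfl le_rfl
  let G : ℝ →+ ℝ := AddMonoidHom.mk' (fun u => g u⁺ - g u⁻) fun u v => by
    have hsplit : (u + v)⁺ + (u⁻ + v⁻) = (u + v)⁻ + (u⁺ + v⁺) := by
      linarith [posPart_sub_negPart u, posPart_sub_negPart v, posPart_sub_negPart (u + v)]
    have := congrArg g hsplit
    rw [hadd _ _ (posPart_nonneg _) (add_nonneg (negPart_nonneg _) (negPart_nonneg _)),
      hadd _ _ (negPart_nonneg _) (add_nonneg (posPart_nonneg _) (posPart_nonneg _)),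
      hadd _ _ (negPart_nonneg _) (negPart_nonneg _),
      hadd _ _ (posPart_nonneg _) (posPart_nonneg _)] at this
    linarith
  have hG : Continuous G :=
    (hg.comp_continuous continuous_posPart posPart_nonneg).sub
      (hg.comp_continuous continuous_negPart negPart_nonneg)
  refine ⟨G 1, fun u hu => ?_⟩
  have hGu : G u = g u := by
    simp [G, posPart_eq_self.mpr hu, negPart_eq_zero.mpr hu, hg0]
  rw [← hGu, mul_comm, ← smul_eq_mul, ← map_real_smul G hG, smul_eq_mul, mul_one]

theorem exists_eq_mul_exp_of_map_add_mul_of_nonneg {f : ℝ → ℝ} (hf : ContinuousOn f (Ici 0))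
    (hpos : ∀ u, 0 ≤ u → 0 < f u)
    (hmul : ∀ u v, 0 ≤ u → 0 ≤ v → f (u + v) * f 0 = f u * f v) :
    ∃ c, ∀ u, 0 ≤ u → f u = f 0 * exp (c * u) := by
  have hlog : ∀ u v, 0 ≤ u → 0 ≤ v →
      log (f (u + v)) - log (f 0) = (log (f u) - log (f 0)) + (log (f v) - log (f 0)) := by
    intro u v hu hv
    have := congrArg log (hmul u v hu hv)
    rw [log_mul (hpos _ (add_nonneg hu hv)).ne' (hpos 0 le_rfl).ne',
      log_mul (hpos u hu).ne' (hpos v hv).ne'] at this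
    linarith
  obtain ⟨c, hc⟩ := exists_eq_mul_of_map_add_of_nonneg (g := fun u => log (f u) - log (f 0))
    ((hf.log fun u hu => (hpos u hu).ne').sub continuousOn_const) hlog
  refine ⟨c, fun u hu => ?_⟩
  rw [← exp_log (hpos u hu), ← exp_log (hpos 0 le_rfl), ← exp_add]
  congr 1
  linarith [hc u hu]

def IsPosDefFun (r : ℝ → ℝ) : Prop :=
  ∀ (n : ℕ) (t c : Fin n → ℝ), 0 ≤ ∑ i, ∑ j, c i * c j * r (t i - t j)

theorem IsPosDefFun.add_apply_neg_le {r : ℝ → ℝ} (hr : IsPosDefFun r) (x : ℝ) :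
    r x + r (-x) ≤ 2 * r 0 := by
  have := hr 2 ![x, 0] ![1, -1]
  simp only [Fin.sum_univ_two] at this
  norm_num at this
  linarith

theorem stmt_1_general (r : ℝ → ℝ)
    (heven : ∀ u : ℝ, r (-u) = r u)
    (hfe : ∀ u v : ℝ, 0 ≤ u → 0 ≤ v → r (u + v) * r 0 = r u * r v)
    (hpd : ∀ (n : ℕ) (t c : Fin n → ℝ),
      0 ≤ ∑ i, ∑ j, c i * c j * r (t i - t j))
    (hpos : ∀ u : ℝ, 0 ≤ u → r u > 0)
    (hc : Continuous r) :
    ∃ A > (0 : ℝ), ∃ α ≥ (0 : ℝ), ∀ u : ℝ, r u = A * Real.exp (-α * |u|) := by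
  obtain ⟨c, hexp⟩ := exists_eq_mul_exp_of_map_add_mul_of_nonneg hc.continuousOn hpos hfe
  have hr0 : 0 < r 0 := hpos 0 le_rfl
  have hc_nonpos : c ≤ 0 := by
    have hbdd := IsPosDefFun.add_apply_neg_le hpd 1
    rw [heven, hexp 1 zero_le_one, mul_one] at hbdd
    exact exp_le_one_iff.mp ((mul_le_iff_le_one_right hr0).mp (by linarith))
  refine ⟨r 0, hr0, -c, neg_nonneg.mpr hc_nonpos, fun u => ?_⟩
  rw [neg_neg, ← hexp |u| (abs_nonneg u)]
  rcases abs_choice u with hu | hu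
  · rw [hu]
  · rw [hu, heven]

theorem stmt_1 (r : ℝ → ℝ)
    (heven : ∀ u : ℝ, r (-u) = r u)
    (h0 : r 0 > 0)
    (hfe : ∀ u v : ℝ, 0 ≤ u → 0 ≤ v → r (u + v) * r 0 = r u * r v)
    (hpd : ∀ (n : ℕ) (t c : Fin n → ℝ),
      0 ≤ ∑ i, ∑ j, c i * c j * r (t i - t j))
    (hpos : ∀ u : ℝ, 0 ≤ u → r u > 0)
    (hc : Continuous r) :
    ∃ A > (0 : ℝ), ∃ α ≥ (0 : ℝ), ∀ u : ℝ, r u = A * Real.exp (-α * |u|) :=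
  stmt_1_general r heven hfe hpd hpos hc
end

section
/- Let a⁻, a⁺ > 0 with a⁻ ≠ a⁺, let A⁻, A⁺ ∈ ℝ, and define f : ℝ → ℝ by f(x) = A⁻·exp(a⁻·x) for x < 0 and f(x) = A⁺·exp(-a⁺·x) for x ≥ 0. Then f ∈ L²(ℝ), and for all h ≥ 0, ∫_{-∞}^{∞} f(x)·f(x+h) dx = ((A⁻)²/(2a⁻) - A⁻A⁺/(a⁻ - a⁺))·exp(-h·a⁻) + ((A⁺)²/(2a⁺) + A⁻A⁺/(a⁻ - a⁺))·exp(-h·a⁺). -/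
/-!
On each of the intervals `x < -h`, `-h ≤ x < 0` and `0 ≤ x` the product `f x * f (x + h)` is a
constant times a single exponential, so the integral splits into three elementary exponential
integrals. The product is integrable by Cauchy–Schwarz, since `f ^ 2` is again a two-sided
exponential and hence integrable.
-/

open MeasureTheory Set Real

lemma integral_exp_mul_Iio {a : ℝ} (ha : 0 < a) (c : ℝ) :
    ∫ x in Iio c, exp (a * x) = exp (a * c) / a := by
  rw [← integral_Iic_eq_integral_Iio, integral_exp_mul_Iic ha]

lemma integral_exp_mul_Ici {a : ℝ} (ha : a < 0) (c : ℝ) :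
    ∫ x in Ici c, exp (a * x) = -exp (a * c) / a := by
  rw [integral_Ici_eq_integral_Ioi, integral_exp_mul_Ioi ha]

lemma integral_exp_mul_Ico {a b c : ℝ} (ha : a ≠ 0) (hbc : b ≤ c) :
    ∫ x in Ico b c, exp (a * x) = (exp (a * c) - exp (a * b)) / a := by
  rw [integral_Ico_eq_integral_Ioc, ← intervalIntegral.integral_of_le hbc,
    intervalIntegral.integral_comp_mul_left (fun x => exp x) ha, integral_exp, smul_eq_mul,
    inv_mul_eq_div]

lemma integral_eq_Iio_add_Ico_add_Ici {E : Type*} [NormedAddCommGroup E] [NormedSpace ℝ E]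
    {μ : Measure ℝ} {g : ℝ → E} (hg : Integrable g μ) {a b : ℝ} (hab : a ≤ b) :
    ∫ x, g x ∂μ = ∫ x in Iio a, g x ∂μ + ∫ x in Ico a b, g x ∂μ + ∫ x in Ici b, g x ∂μ := by
  rw [← intervalIntegral.integral_Ici_sub_Ici hg.integrableOn hab,
    ← intervalIntegral.integral_Iio_add_Ici (b := a) hg.integrableOn hg.integrableOn]
  abel

noncomputable def twoSidedExp (Am am Ap ap x : ℝ) : ℝ :=
  if x < 0 then Am * exp (am * x) else Ap * exp (-ap * x)

section twoSidedExp

variable {Am am Ap ap : ℝ}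

lemma measurable_twoSidedExp : Measurable (twoSidedExp Am am Ap ap) :=
  Measurable.ite measurableSet_Iio (by fun_prop) (by fun_prop)

lemma twoSidedExp_sq (x : ℝ) :
    twoSidedExp Am am Ap ap x ^ 2 = twoSidedExp (Am ^ 2) (2 * am) (Ap ^ 2) (2 * ap) x := by
  unfold twoSidedExp
  split_ifs <;> rw [mul_pow, ← exp_nat_mul] <;> ring_nf

lemma integrable_twoSidedExp (ham : 0 < am) (hap : 0 < ap) :
    Integrable (twoSidedExp Am am Ap ap) := by
  have hneg : IntegrableOn (twoSidedExp Am am Ap ap) (Iio 0) :=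
    IntegrableOn.congr_fun
      (((integrableOn_exp_mul_Iic ham 0).mono_set Iio_subset_Iic_self).const_mul Am)
      (fun x hx => by simp [twoSidedExp, mem_Iio.1 hx]) measurableSet_Iio
  have hpos : IntegrableOn (twoSidedExp Am am Ap ap) (Ici 0) :=
    IntegrableOn.congr_fun
      ((Iff.mpr integrableOn_Ici_iff_integrableOn_Ioi
        (integrableOn_exp_mul_Ioi (neg_neg_of_pos hap) 0)).const_mul Ap)
      (fun x hx => by simp [twoSidedExp, not_lt.2 (mem_Ici.1 hx)]) measurableSet_Ici
  rw [← integrableOn_univ, ← Iio_union_Ici (a := 0)]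
  exact hneg.union hpos

lemma memLp_two_twoSidedExp (ham : 0 < am) (hap : 0 < ap) :
    MemLp (twoSidedExp Am am Ap ap) 2 := by
  rw [memLp_two_iff_integrable_sq measurable_twoSidedExp.aestronglyMeasurable]
  simp only [twoSidedExp_sq]
  exact integrable_twoSidedExp (by positivity) (by positivity)

lemma integral_Iio_twoSidedExp_mul_shift (ham : 0 < am) {h : ℝ} (hh : 0 ≤ h) :
    ∫ x in Iio (-h), twoSidedExp Am am Ap ap x * twoSidedExp Am am Ap ap (x + h) =
      Am ^ 2 / (2 * am) * exp (-h * am) := by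
  have hpt : ∀ x ∈ Iio (-h), twoSidedExp Am am Ap ap x * twoSidedExp Am am Ap ap (x + h) =
      Am ^ 2 * exp (am * h) * exp (2 * am * x) := by
    intro x hx
    have hx : x + h < 0 := by linarith [mem_Iio.1 hx]
    simp only [twoSidedExp, if_pos hx, if_pos (show x < 0 by linarith)]
    rw [mul_mul_mul_comm, ← exp_add, mul_assoc (Am ^ 2), ← exp_add]
    ring_nf
  rw [setIntegral_congr_fun measurableSet_Iio hpt, integral_const_mul,
    integral_exp_mul_Iio (by positivity), mul_div_assoc', mul_assoc, ← exp_add]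
  ring_nf

lemma integral_Ico_twoSidedExp_mul_shift (hne : am ≠ ap) {h : ℝ} (hh : 0 ≤ h) :
    ∫ x in Ico (-h) 0, twoSidedExp Am am Ap ap x * twoSidedExp Am am Ap ap (x + h) =
      Am * Ap / (am - ap) * (exp (-h * ap) - exp (-h * am)) := by
  have hpt : ∀ x ∈ Ico (-h) 0, twoSidedExp Am am Ap ap x * twoSidedExp Am am Ap ap (x + h) =
      Am * Ap * exp (-ap * h) * exp ((am - ap) * x) := by
    rintro x ⟨hx, hx0⟩
    simp only [twoSidedExp, if_pos hx0, if_neg (show ¬x + h < 0 by linarith)]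
    rw [mul_mul_mul_comm, ← exp_add, mul_assoc (Am * Ap), ← exp_add]
    ring_nf
  rw [setIntegral_congr_fun measurableSet_Ico hpt, integral_const_mul,
    integral_exp_mul_Ico (sub_ne_zero.2 hne) (by linarith), mul_zero, exp_zero, mul_div_assoc',
    mul_sub, mul_one, mul_assoc (Am * Ap), ← exp_add]
  ring_nf

lemma integral_Ici_twoSidedExp_mul_shift (hap : 0 < ap) {h : ℝ} (hh : 0 ≤ h) :
    ∫ x in Ici 0, twoSidedExp Am am Ap ap x * twoSidedExp Am am Ap ap (x + h) =
      Ap ^ 2 / (2 * ap) * exp (-h * ap) := by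
  have hpt : ∀ x ∈ Ici 0, twoSidedExp Am am Ap ap x * twoSidedExp Am am Ap ap (x + h) =
      Ap ^ 2 * exp (-ap * h) * exp (-(2 * ap) * x) := by
    intro x hx
    have hx : 0 ≤ x := hx
    simp only [twoSidedExp, if_neg (not_lt.2 hx), if_neg (show ¬x + h < 0 by linarith)]
    rw [mul_mul_mul_comm, ← exp_add, mul_assoc (Ap ^ 2), ← exp_add]
    ring_nf
  rw [setIntegral_congr_fun measurableSet_Ici hpt, integral_const_mul,
    integral_exp_mul_Ici (by linarith), mul_zero, exp_zero]
  field_simp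

theorem integral_twoSidedExp_mul_shift (ham : 0 < am) (hap : 0 < ap) (hne : am ≠ ap) {h : ℝ}
    (hh : 0 ≤ h) :
    ∫ x, twoSidedExp Am am Ap ap x * twoSidedExp Am am Ap ap (x + h) =
      (Am ^ 2 / (2 * am) - Am * Ap / (am - ap)) * exp (-h * am) +
        (Ap ^ 2 / (2 * ap) + Am * Ap / (am - ap)) * exp (-h * ap) := by
  have hL2 := memLp_two_twoSidedExp (Am := Am) (Ap := Ap) ham hap
  have hint : Integrable fun x => twoSidedExp Am am Ap ap x * twoSidedExp Am am Ap ap (x + h) :=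
    hL2.integrable_mul (hL2.comp_measurePreserving (measurePreserving_add_right volume h))
  rw [integral_eq_Iio_add_Ico_add_Ici hint (neg_nonpos.2 hh),
    integral_Iio_twoSidedExp_mul_shift ham hh, integral_Ico_twoSidedExp_mul_shift hne hh,
    integral_Ici_twoSidedExp_mul_shift hap hh]
  ring

end twoSidedExp

theorem stmt_4 (am ap Am Ap : ℝ) (ham : 0 < am) (hap : 0 < ap) (hne : am ≠ ap)
    (f : ℝ → ℝ)
    (hf : ∀ x : ℝ, f x = if x < 0 then Am * Real.exp (am * x) else Ap * Real.exp (-ap * x)) :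
    MemLp f 2 volume ∧
    ∀ h : ℝ, 0 ≤ h →
      ∫ x : ℝ, f x * f (x + h) =
        (Am ^ 2 / (2 * am) - Am * Ap / (am - ap)) * Real.exp (-h * am) +
        (Ap ^ 2 / (2 * ap) + Am * Ap / (am - ap)) * Real.exp (-h * ap) := by
  obtain rfl : f = twoSidedExp Am am Ap ap := funext hf
  exact ⟨memLp_two_twoSidedExp ham hap, fun h hh => integral_twoSidedExp_mul_shift ham hap hne hh⟩
end

section
/- Let r(u) = A₁·e^{-a₁u} + A₂·e^{-a₂u} for u ≥ 0, with a₁, a₂ > 0 distinct, and suppose a₁A₁ + a₂A₂ = 0 (so r'(0) = 0) and r''(0) ≠ 0, r(0) ≠ 0. Then for all u, v > 0: r(u+v) = r(u)·r(v)/r(0) + r'(u)·r'(v)/r''(0). -/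
/-! Write `eᵢ(u) = exp (-aᵢ u)` and let `G(p, q) = A₁ p₁ q₁ + A₂ p₂ q₂` on `ℝ²`. Then
`r(u + v) = G(e(u), e(v))`, `r(u) = G(e(u), (1, 1))` and `r'(u) = -G(e(u), (a₁, a₂))`.
The condition `r'(0) = 0` says that `(1, 1)` and `(a₁, a₂)` are `G`-orthogonal, and their
`G`-lengths `r(0)`, `r''(0)` are nonzero, so they form an orthogonal basis and the identity is
the expansion of `G(e(u), e(v))` in that basis. -/

open Real

lemma deriv_two_exp (a₁ a₂ A₁ A₂ : ℝ) :
    deriv (fun u => A₁ * exp (-a₁ * u) + A₂ * exp (-a₂ * u)) =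
      fun u => -a₁ * A₁ * exp (-a₁ * u) + -a₂ * A₂ * exp (-a₂ * u) := by
  funext u
  have hexp (a : ℝ) : HasDerivAt (fun u => exp (-a * u)) (exp (-a * u) * -a) u := by
    simpa using ((hasDerivAt_id u).const_mul (-a)).exp
  exact (((hexp a₁).const_mul A₁).add ((hexp a₂).const_mul A₂)).deriv.trans (by ring)

lemma diag_form_eq_of_orthogonal {K : Type*} [Field K] {a₁ a₂ A₁ A₂ : K}
    (horth : a₁ * A₁ + a₂ * A₂ = 0) (h₀ : A₁ + A₂ ≠ 0) (h₁ : a₁ ^ 2 * A₁ + a₂ ^ 2 * A₂ ≠ 0)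
    (p₁ p₂ q₁ q₂ : K) :
    A₁ * (p₁ * q₁) + A₂ * (p₂ * q₂) =
      (A₁ * p₁ + A₂ * p₂) * (A₁ * q₁ + A₂ * q₂) / (A₁ + A₂) +
        (a₁ * A₁ * p₁ + a₂ * A₂ * p₂) * (a₁ * A₁ * q₁ + a₂ * A₂ * q₂) /
          (a₁ ^ 2 * A₁ + a₂ ^ 2 * A₂) := by
  rw [div_add_div _ _ h₀ h₁, eq_div_iff (mul_ne_zero h₀ h₁)]
  linear_combination (A₁ * (a₂ * A₂ - a₁ * A₁) * (p₁ * q₁) +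
    A₂ * (a₁ * A₁ - a₂ * A₂) * (p₂ * q₂) - A₁ * A₂ * (a₁ + a₂) * (p₁ * q₂ + p₂ * q₁)) * horth

theorem stmt_7_general (a₁ a₂ A₁ A₂ : ℝ)
    (hderiv0 : a₁ * A₁ + a₂ * A₂ = 0)
    (r : ℝ → ℝ)
    (hr : ∀ u : ℝ, r u = A₁ * Real.exp (-a₁ * u) + A₂ * Real.exp (-a₂ * u))
    (h2nd : deriv (deriv r) 0 ≠ 0) (h0 : r 0 ≠ 0) :
    ∀ u v : ℝ, 0 < u → 0 < v →
      r (u + v) = r u * r v / r 0 + deriv r u * deriv r v / deriv (deriv r) 0 := by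
  intro u v _ _
  obtain rfl : r = fun u => A₁ * exp (-a₁ * u) + A₂ * exp (-a₂ * u) := funext hr
  simp only [deriv_two_exp, mul_zero, exp_zero, mul_one] at h2nd h0 ⊢
  have h₁ : a₁ ^ 2 * A₁ + a₂ ^ 2 * A₂ ≠ 0 := by
    contrapose! h2nd
    linear_combination h2nd
  rw [mul_add, mul_add, exp_add, exp_add, diag_form_eq_of_orthogonal hderiv0 h0 h₁]
  ring

theorem stmt_7 (a₁ a₂ A₁ A₂ : ℝ) (h1 : 0 < a₁) (h2 : 0 < a₂) (hne : a₁ ≠ a₂)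
    (hderiv0 : a₁ * A₁ + a₂ * A₂ = 0)
    (r : ℝ → ℝ)
    (hr : ∀ u : ℝ, r u = A₁ * Real.exp (-a₁ * u) + A₂ * Real.exp (-a₂ * u))
    (h2nd : deriv (deriv r) 0 ≠ 0) (h0 : r 0 ≠ 0) :
    ∀ u v : ℝ, 0 < u → 0 < v →
      r (u + v) = r u * r v / r 0 + deriv r u * deriv r v / deriv (deriv r) 0 :=
  stmt_7_general a₁ a₂ A₁ A₂ hderiv0 r hr h2nd h0
end

section
/- Let r : (0,∞) → ℝ be C¹ on (0,∞), with r(0) ≠ 0, r''(0) ≠ 0 (one-sided limits), satisfying r(u+v) = r(u)r(v)/r(0) + r'(u)r'(v)/r''(0) for all u, v > 0 (with r, r' extended continuously to 0). Then r is infinitely differentiable on (0,∞). -/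
open Set NormedSpace

/-- Constancy from zero derivative on `Ioi 0`. -/
lemma constOn_aux {E : Type*} [NormedAddCommGroup E] [NormedSpace ℝ E] {f : ℝ → E}
    (hd : ∀ t ∈ Ioi (0:ℝ), HasDerivAt f 0 t) {x y : ℝ} (hx : 0 < x) (hxy : x ≤ y) :
    f y = f x := by
  refine constant_of_has_deriv_right_zero (f := f) (a := x) (b := y)
    (fun t ht => (hd t (lt_of_lt_of_le hx ht.1)).continuousAt.continuousWithinAt)
    (fun t ht => (hd t (lt_of_lt_of_le hx ht.1)).hasDerivWithinAt) y
    (by constructor <;> simp [hxy])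

set_option maxHeartbeats 1000000 in
/-- A C¹ function on `Ioi 0` satisfying a constant-coefficient second order linear ODE
is analytic there. -/
lemma analytic_of_ode (r : ℝ → ℝ) (a b : ℝ)
    (hd1 : ∀ t ∈ Ioi (0:ℝ), HasDerivAt r (deriv r t) t)
    (hd2 : ∀ t ∈ Ioi (0:ℝ), HasDerivAt (deriv r) (a * r t + b * deriv r t) t) :
    AnalyticOnNhd ℝ r (Ioi 0) := by
  set A : ℝ × ℝ →L[ℝ] ℝ × ℝ :=
    (ContinuousLinearMap.snd ℝ ℝ ℝ).prod
      (a • ContinuousLinearMap.fst ℝ ℝ ℝ + b • ContinuousLinearMap.snd ℝ ℝ ℝ) with hA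
  set g : ℝ → ℝ × ℝ := fun t => (r t, deriv r t) with hgdef
  have hg : ∀ t ∈ Ioi (0:ℝ), HasDerivAt g (A (g t)) t := by
    intro t ht
    have hval : A (g t) = (deriv r t, a * r t + b * deriv r t) := by
      simp [hA, hgdef, smul_eq_mul]
    rw [hval]
    exact (hd1 t ht).prodMk (hd2 t ht)
  set F : ℝ → ℝ × ℝ := fun t => exp ((-t) • A) (g t) with hFdef
  have hF : ∀ t ∈ Ioi (0:ℝ), HasDerivAt F 0 t := by
    intro t ht
    have hE : HasDerivAt (fun s : ℝ => exp (s • A)) (exp ((-t) • A) * A) (-t) :=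
      hasDerivAt_exp_smul_const A (-t)
    have hneg : HasDerivAt (fun s : ℝ => -s) (-1 : ℝ) t := (hasDerivAt_id t).neg
    have hcomp : HasDerivAt (fun s : ℝ => exp ((-s) • A))
        ((-1 : ℝ) • (exp ((-t) • A) * A)) t := HasDerivAt.scomp t hE hneg
    have := hcomp.clm_apply (hg t ht)
    have h0' : ((-1 : ℝ) • (exp ((-t) • A) * A)) (g t) + (exp ((-t) • A)) (A (g t))
        = (0 : ℝ × ℝ) := by
      simp [ContinuousLinearMap.smul_apply, ContinuousLinearMap.mul_apply]
    exact h0' ▸ this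
  -- exp(t•A) * exp(-t•A) = 1
  have hinv : ∀ t : ℝ, exp (t • A) * exp ((-t) • A) = 1 := by
    intro t
    have hcomm : Commute (t • A) ((-t) • A) := by
      unfold Commute SemiconjBy
      rw [smul_mul_assoc, mul_smul_comm, smul_mul_assoc, mul_smul_comm, smul_comm]
    rw [← exp_add_of_commute_of_mem_ball (𝕂 := ℝ) hcomm
      (by rw [expSeries_radius_eq_top]; exact edist_lt_top _ _)
      (by rw [expSeries_radius_eq_top]; exact edist_lt_top _ _), ← add_smul]
    simp
  intro x hx
  have hx0 : (0:ℝ) < x := hx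
  have hx2 : (0:ℝ) < x / 2 := by linarith
  -- F is constant on [x/2, x+1]
  have hconst : ∀ t ∈ Icc (x/2) (x+1), F t = F (x/2) := by
    intro t ht
    refine constant_of_has_deriv_right_zero (f := F) (a := x/2) (b := x+1)
      (fun s hs => (hF s (lt_of_lt_of_le hx2 hs.1)).continuousAt.continuousWithinAt)
      (fun s hs => (hF s (lt_of_lt_of_le hx2 hs.1)).hasDerivWithinAt) t ht
  have hrep : ∀ t ∈ Icc (x/2) (x+1), r t = (exp (t • A) (F (x/2))).1 := by
    intro t ht
    have h1 : exp (t • A) (F t) = g t := by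
      rw [hFdef]
      show (exp (t • A)) ((exp ((-t) • A)) (g t)) = g t
      rw [← ContinuousLinearMap.mul_apply, hinv]
      simp
    rw [← hconst t ht, h1]
  have hana : AnalyticAt ℝ (fun t : ℝ => (exp (t • A) (F (x/2))).1) x := by
    have h1 : AnalyticAt ℝ (fun t : ℝ => t • A) x :=
      (((1 : ℝ →L[ℝ] ℝ).smulRight A).analyticAt x : AnalyticAt ℝ _ x)
    have h2 : AnalyticAt ℝ (exp) (x • A) :=
      analyticAt_exp_of_mem_ball _ (by rw [expSeries_radius_eq_top]; exact edist_lt_top _ _)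
    have h3 : AnalyticAt ℝ (fun t : ℝ => exp (t • A)) x := by
      have := AnalyticAt.comp (f := fun t : ℝ => t • A) h2 h1
      exact this
    have h4 := ((ContinuousLinearMap.fst ℝ ℝ ℝ).comp
      (ContinuousLinearMap.apply ℝ (ℝ × ℝ) (F (x/2)))).analyticAt
    have := AnalyticAt.comp (f := fun t : ℝ => exp (t • A)) (h4 (exp (x • A))) h3
    exact this
  refine hana.congr ?_
  refine Filter.eventuallyEq_of_mem (Ioo_mem_nhds (a := x/2) (b := x+1) (by linarith) (by linarith)) ?_
  intro t ht
  exact (hrep t ⟨le_of_lt ht.1, le_of_lt ht.2⟩).symm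

theorem stmt_8 (r : ℝ → ℝ) (c : ℝ)
    (hC1 : ContDiffOn ℝ 1 r (Set.Ioi 0))
    (hcont : Filter.Tendsto r (nhdsWithin 0 (Set.Ioi 0)) (nhds (r 0)))
    (hcont' : ∃ L : ℝ, Filter.Tendsto (deriv r) (nhdsWithin 0 (Set.Ioi 0)) (nhds L))
    (h0 : r 0 ≠ 0) (hc : c ≠ 0)
    (hfe : ∀ u v : ℝ, 0 < u → 0 < v →
      r (u + v) = r u * r v / r 0 + deriv r u * deriv r v / c) :
    ContDiffOn ℝ (⊤ : ℕ∞) r (Set.Ioi 0) := by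
  have hdiff : ∀ t ∈ Ioi (0:ℝ), HasDerivAt r (deriv r t) t := fun t ht =>
    ((hC1.differentiableOn one_ne_zero).differentiableAt (isOpen_Ioi.mem_nhds ht)).hasDerivAt
  by_cases hz : ∀ v ∈ Ioi (0:ℝ), deriv r v = 0
  · -- r is constant on Ioi 0
    have key : ∀ x y : ℝ, 0 < x → x ≤ y → r y = r x := by
      intro x y hx hxy
      exact constOn_aux (fun t ht => hz t ht ▸ hdiff t ht) hx hxy
    have hval : ∀ x ∈ Ioi (0:ℝ), r x = (fun _ : ℝ => r 1) x := by
      intro x hx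
      have h1 : r x = r (min x 1) := key _ _ (lt_min hx one_pos) (min_le_left _ _)
      have h2 : r 1 = r (min x 1) := key _ _ (lt_min hx one_pos) (min_le_right _ _)
      simp only []
      rw [h1, h2]
    exact contDiffOn_const.congr hval
  · push_neg at hz
    obtain ⟨v₀, hv₀pos, hv₀⟩ := hz
    -- Bootstrap: deriv r is C¹ on Ioi 0
    have heq : ∀ u ∈ Ioi (0:ℝ),
        deriv r u = (r (u + v₀) - r u * r v₀ / r 0) * c / deriv r v₀ := by
      intro u hu
      have h := hfe u v₀ hu hv₀pos
      rw [h]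
      field_simp
      ring
    have h1 : ContDiffOn ℝ 1 (fun u : ℝ => r (u + v₀)) (Ioi 0) :=
      hC1.comp ((contDiff_id.add contDiff_const).contDiffOn)
        (fun u hu => mem_Ioi.mpr (add_pos hu hv₀pos))
    have hφ : ContDiffOn ℝ 1
        (fun u : ℝ => (r (u + v₀) - r u * r v₀ / r 0) * c / deriv r v₀) (Ioi 0) :=
      (((h1.sub ((hC1.mul contDiffOn_const).div_const (r 0))).mul
        contDiffOn_const).div_const (deriv r v₀))
    have hC1' : ContDiffOn ℝ 1 (deriv r) (Ioi 0) := hφ.congr heq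
    have hdiff2 : ∀ t ∈ Ioi (0:ℝ), HasDerivAt (deriv r) (deriv (deriv r) t) t := fun t ht =>
      ((hC1'.differentiableOn one_ne_zero).differentiableAt (isOpen_Ioi.mem_nhds ht)).hasDerivAt
    -- mixed derivative identity
    have hmix : ∀ u v : ℝ, 0 < u → 0 < v →
        deriv r (u + v) = deriv r u * r v / r 0 + deriv (deriv r) u * deriv r v / c := by
      intro u v hu hv
      have hL : HasDerivAt (fun u : ℝ => r (u + v)) (deriv r (u + v)) u := by
        have := (hdiff (u + v) (add_pos hu hv)).comp u ((hasDerivAt_id u).add_const v)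
        rw [mul_one] at this
        exact this
      have hR : HasDerivAt (fun u : ℝ => r u * r v / r 0 + deriv r u * deriv r v / c)
          (deriv r u * r v / r 0 + deriv (deriv r) u * deriv r v / c) u :=
        (((hdiff u hu).mul_const (r v)).div_const (r 0)).add
          (((hdiff2 u hu).mul_const (deriv r v)).div_const c)
      have hEq : (fun u : ℝ => r (u + v)) =ᶠ[nhds u]
          (fun u : ℝ => r u * r v / r 0 + deriv r u * deriv r v / c) :=
        Filter.eventuallyEq_of_mem (isOpen_Ioi.mem_nhds hu) (fun t ht => hfe t v ht hv)
      exact hL.unique (hR.congr_of_eventuallyEq hEq)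
    -- the ODE
    set a : ℝ := c / r 0 with ha
    set b : ℝ := deriv (deriv r) v₀ / deriv r v₀ - r v₀ * c / (r 0 * deriv r v₀) with hb
    have hode : ∀ u ∈ Ioi (0:ℝ), HasDerivAt (deriv r) (a * r u + b * deriv r u) u := by
      intro u hu
      have h1 := hmix u v₀ hu hv₀pos
      have h2 := hmix v₀ u hv₀pos hu
      rw [add_comm v₀ u] at h2
      have h3 : deriv (deriv r) u * (deriv r v₀ / c) = deriv r v₀ * r u / r 0 +
          deriv (deriv r) v₀ * deriv r u / c - deriv r u * r v₀ / r 0 := by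
        linarith [mul_div_assoc (deriv (deriv r) u) (deriv r v₀) c]
      have h4 : deriv (deriv r) u = (deriv (deriv r) u * (deriv r v₀ / c)) * (c / deriv r v₀) := by
        field_simp
      have hval : deriv (deriv r) u = a * r u + b * deriv r u := by
        rw [h4, h3, ha, hb]
        field_simp
        ring
      rw [← hval]
      exact hdiff2 u hu
    have hana : AnalyticOnNhd ℝ r (Ioi 0) := analytic_of_ode r a b hdiff hode
    exact hana.contDiffOn isOpen_Ioi.uniqueDiffOn
end

section
/- Let r be as in the previous statement (satisfying the rank-2 functional equation with r'(0⁺) = 0). Then r satisfies on (0,∞) the second-order linear ODE with constant coefficients: r''(u) = r(u)·(r''(0)/r(0)) + r'(u)·(r'''(0⁺)/r''(0)). -/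
theorem stmt_9 (r : ℝ → ℝ) (r0 r2 r3 : ℝ)
    (hsmooth : ContDiffOn ℝ (⊤ : ℕ∞) r (Set.Ioi 0))
    (h0 : Filter.Tendsto r (nhdsWithin 0 (Set.Ioi 0)) (nhds r0))
    (h1 : Filter.Tendsto (deriv r) (nhdsWithin 0 (Set.Ioi 0)) (nhds 0))
    (h2 : Filter.Tendsto (deriv (deriv r)) (nhdsWithin 0 (Set.Ioi 0)) (nhds r2))
    (h3 : Filter.Tendsto (deriv (deriv (deriv r))) (nhdsWithin 0 (Set.Ioi 0)) (nhds r3))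
    (hr0 : r0 ≠ 0) (hr2 : r2 ≠ 0)
    (hfe : ∀ u v : ℝ, 0 < u → 0 < v →
      r (u + v) = r u * r v / r0 + deriv r u * deriv r v / r2) :
    ∀ u : ℝ, 0 < u →
      deriv (deriv r) u = r u * (r2 / r0) + deriv r u * (r3 / r2) := by
  intro u hu
  have hs1 : ContDiffOn ℝ (⊤ : ℕ∞) (deriv r) (Set.Ioi 0) :=
    hsmooth.deriv_of_isOpen isOpen_Ioi (by simp)
  have hs2 : ContDiffOn ℝ (⊤ : ℕ∞) (deriv (deriv r)) (Set.Ioi 0) :=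
    hs1.deriv_of_isOpen isOpen_Ioi (by simp)
  have hd1 : ∀ x : ℝ, 0 < x → DifferentiableAt ℝ r x := fun x hx =>
    (hsmooth.contDiffAt (isOpen_Ioi.mem_nhds hx)).differentiableAt (by simp)
  have hd2 : ∀ x : ℝ, 0 < x → DifferentiableAt ℝ (deriv r) x := fun x hx =>
    (hs1.contDiffAt (isOpen_Ioi.mem_nhds hx)).differentiableAt (by simp)
  have hd3 : ∀ x : ℝ, 0 < x → DifferentiableAt ℝ (deriv (deriv r)) x := fun x hx =>
    (hs2.contDiffAt (isOpen_Ioi.mem_nhds hx)).differentiableAt (by simp)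
  -- first derivative of the functional equation in v
  have E1 : ∀ v : ℝ, 0 < v →
      deriv r (u + v) = r u * deriv r v / r0 + deriv r u * deriv (deriv r) v / r2 := by
    intro v hv
    have heq : (fun x => r (u + x)) =ᶠ[nhds v]
        (fun x => r u / r0 * r x + deriv r u / r2 * deriv r x) := by
      filter_upwards [isOpen_Ioi.mem_nhds hv] with x hx
      have := hfe u x hu hx
      rw [this]; ring
    have hD := heq.deriv_eq
    rw [deriv_comp_const_add] at hD
    rw [hD, deriv_fun_add ((hd1 v hv).const_mul _) ((hd2 v hv).const_mul _),
      deriv_const_mul _ (hd1 v hv), deriv_const_mul _ (hd2 v hv)]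
    ring
  -- second derivative of the functional equation in v
  have E2 : ∀ v : ℝ, 0 < v →
      deriv (deriv r) (u + v) =
        r u * deriv (deriv r) v / r0 + deriv r u * deriv (deriv (deriv r)) v / r2 := by
    intro v hv
    have heq : (fun x => deriv r (u + x)) =ᶠ[nhds v]
        (fun x => r u / r0 * deriv r x + deriv r u / r2 * deriv (deriv r) x) := by
      filter_upwards [isOpen_Ioi.mem_nhds hv] with x hx
      have := E1 x hx
      rw [this]; ring
    have hD := heq.deriv_eq
    rw [deriv_comp_const_add] at hD
    rw [hD, deriv_fun_add ((hd2 v hv).const_mul _) ((hd3 v hv).const_mul _),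
      deriv_const_mul _ (hd2 v hv), deriv_const_mul _ (hd3 v hv)]
    ring
  -- take v → 0⁺
  have htrans : Filter.Tendsto (fun v : ℝ => u + v) (nhdsWithin 0 (Set.Ioi 0)) (nhds u) := by
    have : Filter.Tendsto (fun v : ℝ => u + v) (nhdsWithin 0 (Set.Ioi 0)) (nhds (u + 0)) :=
      (continuous_const.add continuous_id).continuousAt.tendsto.comp
        (nhdsWithin_le_nhds)
    simpa using this
  have hcont : ContinuousAt (deriv (deriv r)) u :=
    (hs2.contDiffAt (isOpen_Ioi.mem_nhds hu)).continuousAt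
  have hL : Filter.Tendsto (fun v : ℝ => deriv (deriv r) (u + v))
      (nhdsWithin 0 (Set.Ioi 0)) (nhds (deriv (deriv r) u)) :=
    hcont.tendsto.comp htrans
  have hR : Filter.Tendsto
      (fun v : ℝ => r u * deriv (deriv r) v / r0 + deriv r u * deriv (deriv (deriv r)) v / r2)
      (nhdsWithin 0 (Set.Ioi 0))
      (nhds (r u * r2 / r0 + deriv r u * r3 / r2)) :=
    (((tendsto_const_nhds.mul h2).div_const r0).add
      ((tendsto_const_nhds.mul h3).div_const r2))
  have hLR : Filter.Tendsto (fun v : ℝ => deriv (deriv r) (u + v))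
      (nhdsWithin 0 (Set.Ioi 0))
      (nhds (r u * r2 / r0 + deriv r u * r3 / r2)) := by
    refine hR.congr' ?_
    filter_upwards [self_mem_nhdsWithin] with v hv
    exact (E2 v hv).symm
  have := tendsto_nhds_unique hL hLR
  rw [this]; ring
end

section
/- Let P(z) = c·∏_{j=0}^{k}(1 - z/ζⱼ) with c > 0, k ≥ 1, and each Im(ζⱼ) > 0, and define r(t) = ∫_{-∞}^{∞} e^{izt}/|P(z)|² dz. Then for t > 0, r satisfies the constant-coefficient ODE P(-iD)r(t) = 0, where D = d/dt and P(-iD) is the differential operator obtained by substituting -i·(d/dt) for z in P. -/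
/-!
Differentiating under the integral sign, `P(-i d/dt) r` is the Fourier integral of
`P(x) / |P(x)|² = 1 / P̄(x)`, where `P̄` is `P` with conjugated coefficients. `P̄` has no zeros in
the closed upper half-plane and `1 / P̄(z) = O(|z|⁻²)` because `deg P ≥ 2`, while `|e^{izt}| ≤ 1`
there for `t ≥ 0`. Cauchy's theorem on the rectangles `[-S, S] × [0, S]` then bounds
`∫_{-S}^{S} e^{ixt} / P̄(x) dx` by `O(1/S)`, so the integral vanishes.
-/

open Complex MeasureTheory Polynomial ComplexConjugate

section FourierMoments

variable {w : ℝ → ℂ}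

lemma norm_pow_mul_exp_mul (m : ℕ) (x s : ℝ) :
    ‖(I * x) ^ m * cexp (I * x * s) * w x‖ = ‖(x : ℂ) ^ m * w x‖ := by
  have : ‖cexp (I * x * s)‖ = 1 := by
    rw [norm_exp]; simp
  simp [this]

lemma integrable_pow_mul_exp_mul {m : ℕ} (hm : Integrable fun x : ℝ => (x : ℂ) ^ m * w x)
    (s : ℝ) : Integrable fun x : ℝ => (I * x) ^ m * cexp (I * x * s) * w x := by
  refine hm.norm.mono' ?_ (.of_forall fun x => (norm_pow_mul_exp_mul m x s).le)
  have hcont : Continuous fun x : ℝ => I ^ m * cexp (I * x * s) := by fun_prop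
  refine (hcont.aestronglyMeasurable.mul hm.aestronglyMeasurable).congr (.of_forall fun x => ?_)
  simp only [Pi.mul_apply, mul_pow]; ring

lemma hasDerivAt_integral_pow_mul_exp_mul {m : ℕ}
    (hm : Integrable fun x : ℝ => (x : ℂ) ^ m * w x)
    (hm' : Integrable fun x : ℝ => (x : ℂ) ^ (m + 1) * w x) (t : ℝ) :
    HasDerivAt (fun s : ℝ => ∫ x : ℝ, (I * x) ^ m * cexp (I * x * s) * w x)
      (∫ x : ℝ, (I * x) ^ (m + 1) * cexp (I * x * t) * w x) t := by
  have hderiv : ∀ x s : ℝ, HasDerivAt (fun s : ℝ => (I * x) ^ m * cexp (I * x * s) * w x)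
      ((I * x) ^ (m + 1) * cexp (I * x * s) * w x) s := fun x s => by
    have := (((hasDerivAt_id' (s : ℂ)).const_mul (I * x)).cexp.comp_ofReal.const_mul
      ((I * x) ^ m)).mul_const (w x)
    exact this.congr_deriv (by ring)
  exact (hasDerivAt_integral_of_dominated_loc_of_deriv_le Filter.univ_mem
    (.of_forall fun s => (integrable_pow_mul_exp_mul hm s).aestronglyMeasurable)
    (integrable_pow_mul_exp_mul hm t) (integrable_pow_mul_exp_mul hm' t).aestronglyMeasurable
    (.of_forall fun x s _ => (norm_pow_mul_exp_mul (w := w) (m + 1) x s).le) hm'.norm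
    (.of_forall fun x s _ => hderiv x s)).2

lemma iteratedDeriv_integral_exp_mul {N : ℕ}
    (hw : ∀ m ≤ N, Integrable fun x : ℝ => (x : ℂ) ^ m * w x) {m : ℕ} (hm : m ≤ N) :
    iteratedDeriv m (fun s : ℝ => ∫ x : ℝ, cexp (I * x * s) * w x) =
      fun s : ℝ => ∫ x : ℝ, (I * x) ^ m * cexp (I * x * s) * w x := by
  induction m with
  | zero => simp
  | succ m ih =>
    rw [iteratedDeriv_succ, ih (by omega)]
    exact funext fun t => (hasDerivAt_integral_pow_mul_exp_mul (hw m (by omega))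
      (hw (m + 1) hm) t).deriv

end FourierMoments

lemma integrable_of_norm_le_div_sq {E : Type*} [NormedAddCommGroup E] {g : ℝ → E}
    (hg : Continuous g) {M R : ℝ} (h : ∀ x, R ≤ |x| → ‖g x‖ ≤ M / x ^ 2) : Integrable g := by
  refine hg.locallyIntegrable.integrable_of_isBigO_cocompact (g := fun x : ℝ => (1 + x ^ 2)⁻¹) ?_
    (integrable_inv_one_add_sq.integrableAtFilter _)
  refine Asymptotics.IsBigO.of_bound (2 * M) ?_
  rw [← Metric.cobounded_eq_cocompact, ← comap_norm_atTop, Filter.eventually_comap,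
    Filter.eventually_atTop]
  refine ⟨max R 1, fun b hb x hx => ?_⟩
  rw [← hx, Real.norm_eq_abs] at hb
  have hx1 : 1 ≤ x ^ 2 := by nlinarith [le_max_right R 1, abs_nonneg x, sq_abs x]
  have hgx := (le_div_iff₀ (by positivity)).1 (h x ((le_max_left R 1).trans hb))
  rw [Real.norm_eq_abs, abs_inv, abs_of_pos (by positivity), ← div_eq_mul_inv,
    le_div_iff₀ (by positivity)]
  nlinarith [norm_nonneg (g x)]

section UpperHalfPlane

variable {f : ℂ → ℂ} {M R : ℝ}

lemma norm_intervalIntegral_le_of_differentiableOn_upperHalfPlane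
    (hf : DifferentiableOn ℂ f {z | 0 ≤ z.im})
    (hdecay : ∀ z : ℂ, 0 ≤ z.im → R ≤ ‖z‖ → ‖f z‖ ≤ M / ‖z‖ ^ 2) {S : ℝ} (hS : 0 < S)
    (hRS : R ≤ S) : ‖∫ x in (-S)..S, f x‖ ≤ 4 * M / S := by
  have hside : ∀ z : ℂ, 0 ≤ z.im → S ≤ ‖z‖ → ‖f z‖ ≤ M / S ^ 2 := fun z hz hSz => by
    have := (le_div_iff₀ (pow_pos (hS.trans_le hSz) 2)).1 (hdecay z hz (hRS.trans hSz))
    rw [le_div_iff₀ (by positivity)]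
    exact le_trans (by gcongr) this
  have hrect := integral_boundary_rect_eq_zero_of_differentiableOn f (-S : ℝ) (S + S * I)
    (hf.mono fun z hz => by
      have := hz.2
      simp only [ofReal_im, add_im, mul_im, I_re, mul_zero, I_im, mul_one,
        ofReal_re, zero_add, add_zero, Set.uIcc_of_le hS.le] at this
      exact this.1)
  simp only [ofReal_re, ofReal_im, add_re, mul_re, I_re, mul_zero,
    I_im, mul_one, sub_zero, add_im, mul_im, zero_add, ofReal_zero, zero_mul, add_zero,
    smul_eq_mul] at hrect
  have hbottom : ∫ x in (-S)..S, f x = (∫ x in (-S)..S, f (x + S * I))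
      - I * (∫ y in (0 : ℝ)..S, f (S + y * I)) + I * (∫ y in (0 : ℝ)..S, f (↑(-S) + y * I)) := by
    linear_combination hrect
  have htop : ‖∫ x in (-S)..S, f (x + S * I)‖ ≤ M / S ^ 2 * |S - -S| :=
    intervalIntegral.norm_integral_le_of_norm_le_const fun x _ => hside _ (by simp [hS.le])
      (by simpa [abs_of_pos hS] using abs_im_le_norm (x + S * I))
  have hright : ‖∫ y in (0 : ℝ)..S, f (S + y * I)‖ ≤ M / S ^ 2 * |S - 0| :=
    intervalIntegral.norm_integral_le_of_norm_le_const fun y hy => by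
      rw [Set.uIoc_of_le hS.le] at hy
      exact hside _ (by simp [hy.1.le])
        (by simpa [abs_of_pos hS] using abs_re_le_norm (S + y * I))
  have hleft : ‖∫ y in (0 : ℝ)..S, f (↑(-S) + y * I)‖ ≤ M / S ^ 2 * |S - 0| :=
    intervalIntegral.norm_integral_le_of_norm_le_const fun y hy => by
      rw [Set.uIoc_of_le hS.le] at hy
      exact hside _ (by simp [hy.1.le])
        (by simpa [abs_of_pos hS] using abs_re_le_norm (↑(-S) + y * I))
  calc ‖∫ x in (-S)..S, f x‖
      ≤ ‖∫ x in (-S)..S, f (x + S * I)‖ + ‖∫ y in (0 : ℝ)..S, f (S + y * I)‖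
        + ‖∫ y in (0 : ℝ)..S, f (↑(-S) + y * I)‖ := by
        rw [hbottom]
        refine (norm_add_le _ _).trans ?_
        rw [norm_mul I, norm_I, one_mul]
        gcongr
        refine (norm_sub_le _ _).trans ?_
        rw [norm_mul, norm_I, one_mul]
    _ ≤ M / S ^ 2 * |S - -S| + M / S ^ 2 * |S - 0| + M / S ^ 2 * |S - 0| := by gcongr
    _ = 4 * M / S := by
      rw [sub_neg_eq_add, sub_zero, abs_of_pos hS, abs_of_pos (by linarith)]
      field_simp; ring

theorem integral_eq_zero_of_differentiableOn_upperHalfPlane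
    (hf : DifferentiableOn ℂ f {z | 0 ≤ z.im})
    (hdecay : ∀ z : ℂ, 0 ≤ z.im → R ≤ ‖z‖ → ‖f z‖ ≤ M / ‖z‖ ^ 2) : ∫ x : ℝ, f x = 0 := by
  have hint : Integrable fun x : ℝ => f x :=
    integrable_of_norm_le_div_sq
      (hf.continuousOn.comp_continuous continuous_ofReal fun x => by simp)
      fun x hx => by simpa using hdecay x (by simp) (by simpa using hx)
  have hsmall : ∀ᶠ S in Filter.atTop, ‖∫ x in (-S)..S, f x‖ ≤ 4 * M / S :=
    Filter.eventually_atTop.2 ⟨max R 1, fun S hS =>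
      norm_intervalIntegral_le_of_differentiableOn_upperHalfPlane hf hdecay
        (zero_lt_one.trans_le ((le_max_right R 1).trans hS)) ((le_max_left R 1).trans hS)⟩
  have hlim : Filter.Tendsto (fun S : ℝ => ∫ x in (-S)..S, f x) Filter.atTop (nhds 0) := by
    exact tendsto_zero_iff_norm_tendsto_zero.2 (squeeze_zero' (.of_forall fun _ => norm_nonneg _)
      hsmall (tendsto_const_nhds.div_atTop Filter.tendsto_id))
  exact tendsto_nhds_unique
    (intervalIntegral_tendsto_integral hint Filter.tendsto_neg_atTop_atBot Filter.tendsto_id) hlim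

end UpperHalfPlane

lemma norm_exp_I_mul_mul_le_one {z : ℂ} (hz : 0 ≤ z.im) {t : ℝ} (ht : 0 ≤ t) :
    ‖cexp (I * z * t)‖ ≤ 1 := by
  rw [norm_exp, Real.exp_le_one_iff]
  simp only [mul_re, I_re, I_im, ofReal_re, ofReal_im, mul_im]
  nlinarith

lemma Polynomial.exists_norm_pow_natDegree_le_mul_norm_eval {𝕜 : Type*} [NormedField 𝕜]
    {Q : 𝕜[X]} (hQ : Q ≠ 0) :
    ∃ C > 0, ∃ R, ∀ z : 𝕜, R ≤ ‖z‖ → ‖z‖ ^ Q.natDegree ≤ C * ‖Q.eval z‖ := by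
  have hdeg : (X ^ Q.natDegree : 𝕜[X]).degree ≤ Q.degree := by
    rw [degree_X_pow, degree_eq_natDegree hQ]
  obtain ⟨C, hC, hbound⟩ := (isBigO_cobounded_of_degree_le hdeg).exists_pos
  have := hbound.bound
  rw [← comap_norm_atTop, Filter.eventually_comap, Filter.eventually_atTop] at this
  obtain ⟨R, hR⟩ := this
  exact ⟨C, hC, R, fun z hz => by simpa using hR ‖z‖ hz z rfl⟩

lemma Polynomial.exists_norm_inv_eval_le_div_sq {𝕜 : Type*} [NormedField 𝕜] {Q : 𝕜[X]}
    (hQ : 2 ≤ Q.natDegree) : ∃ M R, ∀ z : 𝕜, R ≤ ‖z‖ → ‖(Q.eval z)⁻¹‖ ≤ M / ‖z‖ ^ 2 := by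
  obtain ⟨C, hC, R, hR⟩ := exists_norm_pow_natDegree_le_mul_norm_eval
    (ne_zero_of_natDegree_gt hQ)
  refine ⟨C, max R 1, fun z hz => ?_⟩
  have hz1 : 1 ≤ ‖z‖ := (le_max_right R 1).trans hz
  rcases eq_or_ne (Q.eval z) 0 with h0 | h0
  · rw [h0, inv_zero, norm_zero]; positivity
  rw [norm_inv, le_div_iff₀ (by positivity), inv_mul_le_iff₀ (norm_pos_iff.2 h0), mul_comm]
  exact (pow_le_pow_right₀ hz1 hQ).trans (hR z ((le_max_left R 1).trans hz))

lemma Polynomial.eval_map_conj (P : ℂ[X]) (z : ℂ) :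
    (P.map (starRingEnd ℂ)).eval z = conj (P.eval (conj z)) := by
  simpa using eval_map_apply (p := P) (f := starRingEnd ℂ) (conj z)

lemma Polynomial.natDegree_one_sub_C_mul_X {K : Type*} [Field K] {a : K} (ha : a ≠ 0) :
    (1 - C a * X).natDegree = 1 := by
  rw [show (1 : K[X]) - C a * X = C (-a) * X + C 1 by simp; ring]
  exact natDegree_linear (neg_ne_zero.2 ha)

lemma Polynomial.integrable_pow_mul_inv_norm_eval_sq {P : ℂ[X]}
    (hP : ∀ x : ℝ, P.eval (x : ℂ) ≠ 0) {m : ℕ} (hm : m + 2 ≤ 2 * P.natDegree) :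
    Integrable fun x : ℝ => (x : ℂ) ^ m * ((‖P.eval (x : ℂ)‖ ^ 2 : ℝ) : ℂ)⁻¹ := by
  have hPx0 : ∀ x : ℝ, ((‖P.eval (x : ℂ)‖ ^ 2 : ℝ) : ℂ) ≠ 0 := fun x => by simpa using hP x
  obtain ⟨C, hC, R, hR⟩ := exists_norm_pow_natDegree_le_mul_norm_eval (Q := P)
    (fun h => hP 0 (by simp [h]))
  refine integrable_of_norm_le_div_sq (by fun_prop (disch := exact hPx0)) (M := C ^ 2)
    (R := max R 1) fun x hx => ?_
  have hx1 : 1 ≤ |x| := (le_max_right R 1).trans hx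
  have hPx : |x| ^ P.natDegree ≤ C * ‖P.eval (x : ℂ)‖ := by
    simpa using hR x (by simpa using (le_max_left R 1).trans hx)
  have hpow : |x| ^ (m + 2) ≤ (|x| ^ P.natDegree) ^ 2 := by
    rw [← pow_mul]; exact pow_le_pow_right₀ hx1 (by omega)
  have hPpos : 0 < ‖P.eval (x : ℂ)‖ := norm_pos_iff.2 (hP x)
  have hnorm : ‖(x : ℂ) ^ m * ((‖P.eval (x : ℂ)‖ ^ 2 : ℝ) : ℂ)⁻¹‖
      = |x| ^ m / ‖P.eval (x : ℂ)‖ ^ 2 := by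
    simp [div_eq_mul_inv]
  rw [hnorm, ← sq_abs x, div_le_div_iff₀ (by positivity) (by positivity), ← pow_add]
  calc |x| ^ (m + 2) ≤ (C * ‖P.eval (x : ℂ)‖) ^ 2 := hpow.trans (by gcongr)
    _ = C ^ 2 * ‖P.eval (x : ℂ)‖ ^ 2 := by ring

lemma Polynomial.sum_coeff_mul_iteratedDeriv_integral_exp_mul (P : ℂ[X]) {w : ℝ → ℂ}
    (hw : ∀ m ≤ P.natDegree, Integrable fun x : ℝ => (x : ℂ) ^ m * w x) (t : ℝ) :
    ∑ m ∈ Finset.range (P.natDegree + 1),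
        P.coeff m * (-I) ^ m * iteratedDeriv m (fun s : ℝ => ∫ x : ℝ, cexp (I * x * s) * w x) t =
      ∫ x : ℝ, cexp (I * x * t) * (P.eval (x : ℂ) * w x) := by
  have hterm : ∀ m ∈ Finset.range (P.natDegree + 1),
      P.coeff m * (-I) ^ m * iteratedDeriv m (fun s : ℝ => ∫ x : ℝ, cexp (I * x * s) * w x) t =
        ∫ x : ℝ, P.coeff m * (-I) ^ m * ((I * x) ^ m * cexp (I * x * t) * w x) := fun m hm => by
    rw [iteratedDeriv_integral_exp_mul hw (Finset.mem_range_succ_iff.1 hm), integral_const_mul]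
  rw [Finset.sum_congr rfl hterm, ← integral_finsetSum _ fun m hm =>
    (integrable_pow_mul_exp_mul (hw m (Finset.mem_range_succ_iff.1 hm)) t).const_mul _]
  refine integral_congr_ae (.of_forall fun x => ?_)
  have hpow : ∀ m : ℕ, (-I) ^ m * (I * x) ^ m = (x : ℂ) ^ m := fun m => by
    rw [← mul_pow, ← mul_assoc, neg_mul, I_mul_I, neg_neg, one_mul]
  simp only [eval_eq_sum_range, Finset.sum_mul, Finset.mul_sum]
  refine Finset.sum_congr rfl fun m _ => ?_
  linear_combination (P.coeff m * cexp (I * x * t) * w x) * hpow m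

theorem Polynomial.sum_coeff_mul_iteratedDeriv_integral_exp_div_norm_eval_sq_eq_zero
    {P : ℂ[X]} (hdeg : 2 ≤ P.natDegree) (hP : ∀ z : ℂ, z.im ≤ 0 → P.eval z ≠ 0)
    {t : ℝ} (ht : 0 ≤ t) :
    ∑ m ∈ Finset.range (P.natDegree + 1), P.coeff m * (-I) ^ m * iteratedDeriv m
      (fun s : ℝ => ∫ x : ℝ, cexp (I * x * s) / (‖P.eval (x : ℂ)‖ ^ 2 : ℝ)) t = 0 := by
  set Q := P.map (starRingEnd ℂ)
  have hQ : ∀ z : ℂ, 0 ≤ z.im → Q.eval z ≠ 0 := fun z hz => by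
    rw [eval_map_conj]
    exact (_root_.map_ne_zero _).2 (hP _ (by simpa using hz))
  have hPQ : ∀ x : ℝ, P.eval (x : ℂ) * ((‖P.eval (x : ℂ)‖ ^ 2 : ℝ) : ℂ)⁻¹ = (Q.eval (x : ℂ))⁻¹ :=
    fun x => by
      rw [eval_map_conj, conj_ofReal, ofReal_pow, ← mul_conj', mul_inv, ← mul_assoc,
        mul_inv_cancel₀ (hP x (by simp)), one_mul]
  simp_rw [div_eq_mul_inv]
  rw [sum_coeff_mul_iteratedDeriv_integral_exp_mul P
    (fun m hm => integrable_pow_mul_inv_norm_eval_sq (fun x => hP x (by simp)) (by omega))]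
  simp_rw [hPQ]
  obtain ⟨M, R, hMR⟩ := exists_norm_inv_eval_le_div_sq (Q := Q)
    (by rwa [natDegree_map_eq_of_injective (RingHom.injective _)])
  refine integral_eq_zero_of_differentiableOn_upperHalfPlane
    (f := fun z => cexp (I * z * t) * (Q.eval z)⁻¹) (M := M) (R := R)
    (fun z hz => ?_) fun z hz hRz => ?_
  · exact ((by fun_prop : Differentiable ℂ fun z => cexp (I * z * t)) z).mul
      ((Q.differentiable z).inv (hQ z hz)) |>.differentiableWithinAt
  · rw [norm_mul]
    exact (mul_le_of_le_one_left (norm_nonneg _) (norm_exp_I_mul_mul_le_one hz ht)).trans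
      (hMR z hRz)

theorem stmt_12 (k : ℕ) (hk : 1 ≤ k) (c : ℝ) (hc : 0 < c)
    (ζ : Fin (k + 1) → ℂ) (hζ : ∀ j, 0 < (ζ j).im)
    (P : Polynomial ℂ)
    (hP : P = Polynomial.C (c : ℂ) * ∏ j, (1 - Polynomial.C (ζ j)⁻¹ * Polynomial.X))
    (r : ℝ → ℂ)
    (hr : ∀ t : ℝ, r t = ∫ x : ℝ,
      Complex.exp (Complex.I * x * t) / (‖P.eval (x : ℂ)‖ ^ 2 : ℝ)) :
    ∀ t : ℝ, 0 < t →
      ∑ m ∈ Finset.range (k + 2),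
        P.coeff m * (-Complex.I) ^ m * iteratedDeriv m r t = 0 := by
  intro t ht
  have hζ0 : ∀ j, ζ j ≠ 0 := fun j h => by simpa [h] using hζ j
  have hlin : ∀ j, (1 - C (ζ j)⁻¹ * X).natDegree = 1 := fun j =>
    natDegree_one_sub_C_mul_X (inv_ne_zero (hζ0 j))
  have hdeg : P.natDegree = k + 1 := by
    rw [hP, natDegree_C_mul (by exact_mod_cast hc.ne'), natDegree_prod _ _ fun j _ =>
      ne_zero_of_natDegree_gt (hlin j ▸ zero_lt_one)]
    simp [hlin]
  have hroots : ∀ z : ℂ, z.im ≤ 0 → P.eval z ≠ 0 := fun z hz => by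
    rw [hP, eval_mul, eval_C, eval_prod]
    refine mul_ne_zero (by exact_mod_cast hc.ne') (Finset.prod_ne_zero_iff.2 fun j _ h => ?_)
    have hzj : z = ζ j := by
      simp only [eval_sub, eval_one, eval_mul, eval_C, eval_X] at h
      field_simp [hζ0 j] at h
      linear_combination -h
    exact (hζ j).not_ge (hzj ▸ hz)
  rw [show r = _ from funext hr, show k + 2 = P.natDegree + 1 by omega]
  exact sum_coeff_mul_iteratedDeriv_integral_exp_div_norm_eval_sq_eq_zero (by omega) hroots ht.le
end
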